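/- arXiv:1410.5479 — 4 statements merged into one kernel-verified Lean document; each statement's English description precedes it below -/
import Mathlib

section
/- For integers k ≥ 0 and l ≤ −2, the double sum ∑_{a=0}^{k−2} ∑_{b=0}^{−l+1} (−1)^{a+l−b} C(2k,a)·C(−l+1,b)·C(k−a−l+b−1, k−2−a)·b(b−1) equals (l^2−l)·(−1)^{k+l}·C(2k+2l−3, k+l−2). -/
/-- Generalized binomial coefficient: `0` for `k < 0`; usual binomial for `n ≥ 0`
(zero when `k > n`); for `n < 0`: `(-1)^k * C (k - n - 1) k` when `k ≥ 0`,
`(-1)^(n-k) * C (-k - 1) (n - k)` when `k ≤ n`, and `0` otherwise. -/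
def C (n k : ℤ) : ℤ :=
  if 0 ≤ n then (if 0 ≤ k then (n.toNat.choose k.toNat : ℤ) else 0)
  else if 0 ≤ k then (-1) ^ k.toNat * ((k - n - 1).toNat.choose k.toNat : ℤ)
  else if k ≤ n then (-1) ^ (n - k).toNat * ((-k - 1).toNat.choose (n - k).toNat : ℤ)
  else 0

/-!
Put `l = -(M + 1)`, `k = n + 2` and read every coefficient as a generalized binomial coefficient
`Ring.choose`. Upper negation turns `C(k-a-l+b-1, k-2-a)` into `±C(-(M+3+b), n-a)`, so the sum over
`a` is a Chu–Vandermonde convolution, equal to `(-1)^n C(2k-M-3-b, n)`. Absorbing `b(b-1)` into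
`C(M+2, b)` leaves the `M`-th alternating difference of `t ↦ C(t, n)`, which is `C(·, n-M)`; at the
point where it is evaluated this is `C(2(n-M)-1, n-M)`, the right-hand side.
-/

open Finset fwdDiff

lemma choose_add_two_mul (M c : ℕ) :
    (M + 2).choose (c + 2) * ((c + 2) * (c + 1)) = (M + 2) * (M + 1) * M.choose c := by
  have h₁ := Nat.add_one_mul_choose_eq (M + 1) (c + 1)
  have h₂ := Nat.add_one_mul_choose_eq M c
  calc (M + 2).choose (c + 2) * ((c + 2) * (c + 1))
      = (M + 2) * (M + 1).choose (c + 1) * (c + 1) := by rw [h₁]; ring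
    _ = (M + 2) * (M + 1) * M.choose c := by rw [mul_assoc _ _ (c + 1), ← h₂]; ring

lemma sum_neg_one_pow_mul_choose_mul_choose_two {R : Type*} [CommRing R] (M : ℕ) (f : ℕ → R) :
    ∑ b ∈ range (M + 3), (-1) ^ b * ((M + 2).choose b : R) * (b * (b - 1)) * f b =
      (M + 2) * (M + 1) * ∑ c ∈ range (M + 1), (-1) ^ c * (M.choose c : R) * f (c + 2) := by
  rw [sum_range_succ', sum_range_succ', mul_sum]
  simp only [Nat.cast_zero, Nat.cast_one, zero_mul, sub_self, mul_zero, zero_add, add_zero]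
  refine sum_congr rfl fun c _ => ?_
  have h : ((M + 2).choose (c + 2) : R) * ((c + 2) * (c + 1)) = (M + 2) * (M + 1) * M.choose c := by
    exact_mod_cast congrArg (Nat.cast (R := R)) (choose_add_two_mul M c)
  push_cast
  linear_combination (-1) ^ c * f (c + 2) * h

section BinomialRing

variable {R : Type*} [CommRing R] [BinomialRing R]

lemma sum_neg_one_pow_mul_ringChoose_mul_ringChoose_add (p N : R) (n : ℕ) :
    ∑ a ∈ range (n + 1), (-1) ^ a * Ring.choose p a * Ring.choose (((n - a : ℕ) : R) + N) (n - a) =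
      (-1) ^ n * Ring.choose (p - N - 1) n := by
  rw [show p - N - 1 = p + -(N + 1) by ring, Ring.add_choose_eq n (Commute.all _ _),
    Nat.sum_antidiagonal_eq_sum_range_succ (fun i j => Ring.choose p i * Ring.choose (-(N + 1)) j),
    mul_sum]
  refine sum_congr rfl fun a ha => ?_
  have hsign : (-1 : R) ^ n = (-1) ^ a * (-1) ^ (n - a) := by
    rw [← pow_add, Nat.add_sub_cancel' (by simpa [Nat.lt_succ_iff] using ha)]
  have hsq : ((-1 : R) ^ (n - a)) ^ 2 = 1 := by rw [← pow_mul, pow_mul', neg_one_sq, one_pow]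
  rw [Ring.choose_neg, Units.smul_def, Int.coe_negOnePow_natCast, hsign,
    show N + 1 + ((n - a : ℕ) : R) - 1 = ((n - a : ℕ) : R) + N by ring]
  linear_combination -(-1) ^ a * Ring.choose p a * Ring.choose (((n - a : ℕ) : R) + N) (n - a) * hsq

lemma fwdDiff_ringChoose (n : ℕ) :
    Δ_[1] (fun t : R => Ring.choose t (n + 1)) = fun t => Ring.choose t n := by
  ext t
  simp [fwdDiff, Ring.choose_succ_succ]

lemma fwdDiff_iter_ringChoose (M n : ℕ) :
    Δ_[1] ^[M] (fun t : R => Ring.choose t n) =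
      fun t => if M ≤ n then Ring.choose t (n - M) else 0 := by
  induction M generalizing n with
  | zero => simp
  | succ M ih =>
    rw [Function.iterate_succ_apply]
    cases n with
    | zero =>
      simp only [Ring.choose_zero_right, fwdDiff_const]
      simp [Function.iterate_fixed (fwdDiff_const (1 : R) (0 : R))]
    | succ n => simp [fwdDiff_ringChoose, ih]

lemma sum_neg_one_pow_mul_choose_mul_ringChoose_sub (M n : ℕ) (y : R) :
    ∑ c ∈ range (M + 1), (-1) ^ c * (M.choose c : R) * Ring.choose (y - c) n =
      if M ≤ n then Ring.choose (y - M) (n - M) else 0 := by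
  have h := fwdDiff_iter_eq_sum_shift (1 : R) (fun t : R => Ring.choose t n) M (y - M)
  rw [fwdDiff_iter_ringChoose, ← sum_range_reflect] at h
  refine .trans (sum_congr rfl fun c hc => ?_) h.symm
  have hc : c ≤ M := Nat.lt_succ_iff.mp (mem_range.mp hc)
  rw [Nat.add_sub_cancel, Nat.sub_sub_self hc, Nat.choose_symm hc, zsmul_eq_mul,
    show y - M + ((M - c : ℕ) • (1 : R)) = y - c by rw [nsmul_one, Nat.cast_sub hc]; ring]
  push_cast
  ring

lemma sum_sum_neg_one_pow_mul_ringChoose_mul_choose (p : R) (n M : ℕ) :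
    ∑ a ∈ range (n + 1), ∑ b ∈ range (M + 3),
        (-1) ^ (a + b) * Ring.choose p a * ((M + 2).choose b : R) *
          Ring.choose (((n - a : ℕ) : R) + (M + 2 + b)) (n - a) * (b * (b - 1)) =
      (-1) ^ n * ((M + 2) * (M + 1)) *
        if M ≤ n then Ring.choose (p - 2 * M - 5) (n - M) else 0 := by
  have sum_over_a : ∀ b : ℕ, ∑ a ∈ range (n + 1),
      (-1) ^ (a + b) * Ring.choose p a * ((M + 2).choose b : R) *
        Ring.choose (((n - a : ℕ) : R) + (M + 2 + b)) (n - a) * (b * (b - 1)) =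
      (-1) ^ b * ((M + 2).choose b : R) * (b * (b - 1)) *
        ((-1) ^ n * Ring.choose (p - M - 3 - b) n) := by
    intro b
    rw [show p - M - 3 - b = p - (M + 2 + b) - 1 by ring,
      ← sum_neg_one_pow_mul_ringChoose_mul_ringChoose_add, mul_sum]
    refine sum_congr rfl fun a _ => ?_
    ring
  have shift : ∀ c : ℕ, (-1) ^ c * (M.choose c : R) *
      ((-1) ^ n * Ring.choose (p - M - 3 - ((c + 2 : ℕ) : R)) n) =
      (-1) ^ n * ((-1) ^ c * (M.choose c : R) * Ring.choose (p - M - 5 - c) n) := by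
    intro c
    rw [show p - M - 3 - ((c + 2 : ℕ) : R) = p - M - 5 - c by push_cast; ring]
    ring
  rw [sum_comm, sum_congr rfl fun b _ => sum_over_a b, sum_neg_one_pow_mul_choose_mul_choose_two,
    sum_congr rfl fun c _ => shift c, ← mul_sum, sum_neg_one_pow_mul_choose_mul_ringChoose_sub,
    show p - M - 5 - M = p - 2 * M - 5 by ring]
  ring

end BinomialRing

lemma C_natCast_right (n : ℤ) (j : ℕ) : C n j = Ring.choose n j := by
  rcases le_or_gt 0 n with hn | hn
  · lift n to ℕ using hn
    simp [C, Ring.choose_natCast]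
  · obtain ⟨r, rfl⟩ : ∃ r : ℕ, n = -(r + 1 : ℕ) := ⟨(-n - 1).toNat, by omega⟩
    rw [Ring.choose_neg, C, if_neg (by omega), if_pos (by positivity),
      show ((r + 1 : ℕ) : ℤ) + j - 1 = ((r + j : ℕ) : ℤ) by push_cast; ring, Ring.choose_natCast,
      show ((j : ℤ) - -((r + 1 : ℕ) : ℤ) - 1).toNat = r + j by omega, Int.toNat_natCast,
      Units.smul_def, Int.coe_negOnePow_natCast, smul_eq_mul]

lemma C_eq_zero_of_lt_of_neg {n k : ℤ} (h : n < k) (hk : k < 0) : C n k = 0 := by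
  simp [C, show ¬ 0 ≤ n by omega, show ¬ 0 ≤ k by omega, show ¬ k ≤ n by omega]

-- At `j = 0` the left side is `C (-1) (-1)`, which the definition of `C` sets to `1`.
lemma C_two_mul_sub_one_sub_one (j : ℕ) :
    C (2 * j - 1) (j - 1) = Ring.choose (2 * j - 1 : ℤ) j := by
  cases j with
  | zero => simp [C]
  | succ i =>
    rw [show 2 * ((i + 1 : ℕ) : ℤ) - 1 = ((2 * i + 1 : ℕ) : ℤ) by push_cast; ring,
      show ((i + 1 : ℕ) : ℤ) - 1 = (i : ℕ) by push_cast; ring, C_natCast_right,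
      Ring.choose_natCast, Ring.choose_natCast, Nat.choose_symm_half]

lemma neg_one_zpow_sub_two_mul {K : Type*} [DivisionRing K] (n t : ℤ) :
    (-1 : K) ^ (n - 2 * t) = (-1) ^ n := by
  rw [zpow_sub₀ (by norm_num), zpow_mul, show (-1 : K) ^ (2 : ℤ) = 1 by norm_num, one_zpow,
    div_one]

lemma summand_eq_ringChoose (n M a b : ℕ) (ha : a ≤ n) :
    (-1 : ℚ) ^ ((a : ℤ) + -((M : ℤ) + 1) - b) *
        (C (2 * (n + 2 : ℕ)) a * C (-(-((M : ℤ) + 1)) + 1) b *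
          C (((n + 2 : ℕ) : ℤ) - a - -((M : ℤ) + 1) + b - 1) (((n + 2 : ℕ) : ℤ) - 2 - a) : ℤ) *
        ((b : ℚ) * ((b : ℚ) - 1)) =
      ((-(-1) ^ M * ((-1) ^ (a + b) * Ring.choose (2 * (n + 2 : ℕ) : ℤ) a *
        ((M + 2).choose b : ℤ) * Ring.choose (((n - a : ℕ) : ℤ) + (M + 2 + b)) (n - a) *
          (b * (b - 1))) : ℤ) : ℚ) := by
  rw [show ((a : ℤ) + -((M : ℤ) + 1) - b) = ((a + b + M + 1 : ℕ) : ℤ) - 2 * (b + M + 1) by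
      push_cast; ring, neg_one_zpow_sub_two_mul, zpow_natCast,
    show ((n + 2 : ℕ) : ℤ) - 2 - a = ((n - a : ℕ) : ℤ) by omega,
    show -(-((M : ℤ) + 1)) + 1 = ((M + 2 : ℕ) : ℤ) by push_cast; ring,
    C_natCast_right, C_natCast_right, C_natCast_right, Ring.choose_natCast,
    show ((n + 2 : ℕ) : ℤ) - a - -((M : ℤ) + 1) + b - 1 = ((n - a : ℕ) : ℤ) + (M + 2 + b) by
      push_cast [ha]; ring]
  push_cast
  ring

/-- For `k ≥ 0`, `l ≤ −2`:
`∑_{a=0}^{k−2} ∑_{b=0}^{−l+1} (−1)^{a+l−b} C(2k,a) C(−l+1,b) C(k−a−l+b−1, k−2−a) b(b−1)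
  = (l^2−l)(−1)^{k+l} C(2k+2l−3, k+l−2)`. -/
theorem stmt5 (k : ℕ) (l : ℤ) (hl : l ≤ -2) :
    ∑ a ∈ Finset.range (k - 1), ∑ b ∈ Finset.range (-l + 2).toNat,
        (-1 : ℚ) ^ ((a : ℤ) + l - b) *
          (C (2 * k) a * C (-l + 1) b * C ((k : ℤ) - a - l + b - 1) ((k : ℤ) - 2 - a) : ℤ) *
          ((b : ℚ) * ((b : ℚ) - 1)) =
      ((l : ℚ) ^ 2 - l) * (-1 : ℚ) ^ ((k : ℤ) + l) *
        (C (2 * k + 2 * l - 3) ((k : ℤ) + l - 2) : ℤ) := by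
  obtain ⟨M, rfl⟩ : ∃ M : ℕ, l = -(M + 1) := ⟨(-l - 1).toNat, by omega⟩
  rw [show (-(-((M : ℤ) + 1)) + 2).toNat = M + 3 by omega]
  obtain hk | ⟨n, rfl⟩ : k ≤ 1 ∨ ∃ n, k = n + 2 :=
    (le_or_gt k 1).imp_right fun hk => ⟨k - 2, by omega⟩
  · rw [show k - 1 = 0 by omega, C_eq_zero_of_lt_of_neg (by omega) (by omega)]
    simp
  rw [sum_congr rfl fun a ha => sum_congr rfl fun b _ =>
      summand_eq_ringChoose n M a b (by rw [mem_range] at ha; omega)]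
  simp only [← Int.cast_sum, ← mul_sum]
  rw [show n + 2 - 1 = n + 1 from rfl, sum_sum_neg_one_pow_mul_ringChoose_mul_choose]
  by_cases hM : M ≤ n
  · obtain ⟨j, rfl⟩ := Nat.exists_eq_add_of_le hM
    rw [if_pos hM, Nat.add_sub_cancel_left,
      show 2 * ((M + j + 2 : ℕ) : ℤ) + 2 * -((M : ℤ) + 1) - 3 = 2 * (j : ℤ) - 1 by push_cast; ring,
      show ((M + j + 2 : ℕ) : ℤ) + -((M : ℤ) + 1) - 2 = (j : ℤ) - 1 by push_cast; ring,
      show 2 * ((M + j + 2 : ℕ) : ℤ) - 2 * M - 5 = 2 * (j : ℤ) - 1 by push_cast; ring,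
      show ((M + j + 2 : ℕ) : ℤ) + -((M : ℤ) + 1) = ((j + 1 : ℕ) : ℤ) by push_cast; ring,
      zpow_natCast, C_two_mul_sub_one_sub_one]
    push_cast
    have hsq : ((-1 : ℚ) ^ M) ^ 2 = 1 := by rw [← pow_mul, pow_mul', neg_one_sq, one_pow]
    linear_combination
      -((M : ℚ) + 1) * (M + 2) * (-1) ^ j * ((Ring.choose (2 * (j : ℤ) - 1) j : ℤ) : ℚ) * hsq
  · rw [if_neg hM, C_eq_zero_of_lt_of_neg (by omega) (by omega)]
    simp
end

section
/- For integers k ≥ 0 and l ≤ −2, the double sum ∑_{a=0}^{k−2} ∑_{b=0}^{−l+1} (−1)^{a+l−b} C(2k,a)·C(−l+1,b)·C(k−a−l+b−1, k−2−a)·b(b−1)(b−2) equals (l^3−l)·(−1)^{k+l}·C(2k+2l−3, k+l−3). -/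
open Finset

def B (n : ℤ) (r : ℕ) : ℤ :=
  if 0 ≤ n then (n.toNat.choose r : ℤ) else (-1) ^ r * (((r : ℤ) - n - 1).toNat.choose r : ℤ)

lemma B_zero (n : ℤ) : B n 0 = 1 := by
  unfold B; split <;> simp

lemma B_nat (n r : ℕ) : B (n : ℤ) r = (n.choose r : ℤ) := by
  unfold B; rw [if_pos (by positivity)]; simp

lemma B_pascal (x : ℤ) (r : ℕ) : B (x + 1) (r + 1) = B x r + B x (r + 1) := by
  unfold B
  rcases le_or_gt 0 x with hx | hx
  · rw [if_pos hx, if_pos hx, if_pos (by omega)]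
    have h : (x + 1).toNat = x.toNat + 1 := by omega
    rw [h, Nat.choose_succ_succ]
    push_cast; ring
  · rcases eq_or_lt_of_le (show x ≤ -1 by omega) with hx1 | hx1
    · rw [show x = -1 from hx1, if_pos (by norm_num), if_neg (by omega), if_neg (by omega)]
      simp only [Nat.cast_add, Nat.cast_one]
      have h1 : ((r:ℤ) + 1 - (-1) - 1).toNat = r + 1 := by omega
      have h2 : ((r:ℤ) - (-1) - 1).toNat = r := by omega
      rw [h1, h2, Nat.choose_self, Nat.choose_self]
      have : (-1 + 1 : ℤ).toNat = 0 := by omega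
      rw [this, Nat.choose_eq_zero_of_lt (by omega)]
      push_cast; ring
    · rw [if_neg (by omega), if_neg (by omega), if_neg (by omega)]
      simp only [Nat.cast_add, Nat.cast_one]
      have h1 : ((r:ℤ) + 1 - (x + 1) - 1).toNat = ((r:ℤ) - x - 1).toNat := by omega
      have h2 : ((r:ℤ) + 1 - x - 1).toNat = ((r:ℤ) - x - 1).toNat + 1 := by omega
      rw [h1, h2, Nat.choose_succ_succ]
      push_cast; ring

lemma B_neg (y : ℤ) (r : ℕ) : B y r = (-1) ^ r * B ((r : ℤ) - 1 - y) r := by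
  unfold B
  rcases le_or_gt 0 y with hy | hy
  · rcases le_or_gt 0 ((r : ℤ) - 1 - y) with h | h
    · rw [if_pos hy, if_pos h]
      rw [Nat.choose_eq_zero_of_lt (by omega), Nat.choose_eq_zero_of_lt (by omega)]
      simp
    · rw [if_pos hy, if_neg (by omega)]
      have h2 : ((r:ℤ) - ((r:ℤ) - 1 - y) - 1).toNat = y.toNat := by omega
      rw [h2, ← mul_assoc, ← mul_pow]
      simp
  · rw [if_neg (by omega), if_pos (by omega)]
    have h2 : ((r:ℤ) - 1 - y).toNat = ((r:ℤ) - y - 1).toNat := by omega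
    rw [h2]

lemma B_vandermonde (N : ℕ) : ∀ (r : ℕ) (x : ℤ),
    ∑ i ∈ range (r + 1), (N.choose i : ℤ) * B x (r - i) = B (x + N) r := by
  induction N with
  | zero =>
    intro r x
    rw [Finset.sum_eq_single 0]
    · simp
    · intro i _ hi
      rw [Nat.choose_eq_zero_of_lt (by omega)]; simp
    · simp
  | succ N ih =>
    intro r x
    match r with
    | 0 => simp [B_zero]
    | s + 1 =>
      rw [Finset.sum_range_succ' _ (s + 1)]
      have step : ∀ i ∈ range (s + 1), ((N + 1).choose (i + 1) : ℤ) * B x (s + 1 - (i + 1))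
          = (N.choose (i + 1) : ℤ) * B x (s - i) + (N.choose i : ℤ) * B x (s - i) := by
        intro i _
        rw [Nat.choose_succ_succ]
        push_cast [Nat.succ_sub_succ, Nat.succ_eq_add_one]
        ring
      rw [Finset.sum_congr rfl step, Finset.sum_add_distrib]
      have e1 : (∑ i ∈ range (s + 1), (N.choose (i + 1) : ℤ) * B x (s - i))
          + ((N + 1).choose 0 : ℤ) * B x (s + 1 - 0)
          = ∑ i ∈ range (s + 2), (N.choose i : ℤ) * B x (s + 1 - i) := by
        rw [Finset.sum_range_succ' (fun i => (N.choose i : ℤ) * B x (s + 1 - i)) (s + 1)]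
        simp only [Nat.choose_zero_right, Nat.cast_one]
        congr 1
        apply Finset.sum_congr rfl
        intro i _
        have : s + 1 - (i + 1) = s - i := by omega
        rw [this]
      have e2 := ih (s + 1) x
      have e3 := ih s x
      have goal : B (x + N) (s + 1) + B (x + N) s = B (x + (N + 1)) (s + 1) := by
        have h := B_pascal (x + N) s
        rw [show x + ((N : ℤ) + 1) = x + N + 1 by ring, h]
        ring
      push_cast at e1 e2 e3 ⊢
      linarith [e1, e2, e3, goal]

lemma B_diff (r : ℕ) : ∀ (n : ℕ) (x : ℤ),
    ∑ j ∈ range (n + 1), (-1 : ℤ) ^ j * (n.choose j : ℤ) * B (x + j) r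
      = (-1) ^ n * (if n ≤ r then B x (r - n) else 0) := by
  intro n
  induction n with
  | zero => intro x; simp
  | succ n ih =>
    intro x
    rw [Finset.sum_range_succ' _ (n + 1)]
    have step : ∀ j ∈ range (n + 1), (-1 : ℤ) ^ (j + 1) * ((n + 1).choose (j + 1) : ℤ) * B (x + ((j + 1 : ℕ) : ℤ)) r
        = -((-1 : ℤ) ^ j * (n.choose j : ℤ) * B ((x + 1) + j) r)
          + (-1) ^ (j + 1) * (n.choose (j + 1) : ℤ) * B (x + ((j + 1 : ℕ) : ℤ)) r := by
      intro j _
      rw [Nat.choose_succ_succ]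
      have hc : x + ((j + 1 : ℕ) : ℤ) = x + 1 + ↑j := by push_cast; ring
      rw [hc]
      push_cast [Nat.succ_eq_add_one]
      ring
    rw [Finset.sum_congr rfl step, Finset.sum_add_distrib]
    have e1 : ∑ j ∈ range (n + 1), -((-1 : ℤ) ^ j * (n.choose j : ℤ) * B ((x + 1) + j) r)
        = -((-1) ^ n * (if n ≤ r then B (x + 1) (r - n) else 0)) := by
      rw [Finset.sum_neg_distrib, ih (x + 1)]
    have e2 : (∑ j ∈ range (n + 1), (-1 : ℤ) ^ (j + 1) * (n.choose (j + 1) : ℤ) * B (x + ((j + 1 : ℕ) : ℤ)) r)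
        + (-1) ^ 0 * ((n + 1).choose 0 : ℤ) * B (x + ((0 : ℕ) : ℤ)) r
        = (-1) ^ n * (if n ≤ r then B x (r - n) else 0) := by
      rw [← ih x, Finset.sum_range_succ' (fun j => (-1 : ℤ) ^ j * (n.choose j : ℤ) * B (x + j) r) n]
      rw [Finset.sum_range_succ _ n, Nat.choose_succ_self]
      push_cast
      simp
    rw [e1]
    have key : (if n ≤ r then B (x + 1) (r - n) else 0) - (if n ≤ r then B x (r - n) else 0)
        = (if n + 1 ≤ r then B x (r - (n + 1)) else 0) := by
      by_cases h1 : n + 1 ≤ r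
      · rw [if_pos (by omega), if_pos (by omega), if_pos h1]
        have hr : r - n = (r - (n + 1)) + 1 := by omega
        rw [hr, B_pascal]; ring
      · by_cases h2 : n ≤ r
        · rw [if_pos h2, if_pos h2, if_neg h1]
          have hr : r - n = 0 := by omega
          rw [hr, B_zero, B_zero]; ring
        · rw [if_neg h2, if_neg h2, if_neg h1]; ring
    linear_combination e2 - (-1 : ℤ) ^ n * key

lemma lem6 (N r : ℕ) (x : ℤ) :
    ∑ a ∈ range (r + 1), (-1 : ℤ) ^ a * (N.choose a : ℤ) * B (x - a) (r - a)
      = B (x - N) r := by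
  have step : ∀ a ∈ range (r + 1), (-1 : ℤ) ^ a * (N.choose a : ℤ) * B (x - a) (r - a)
      = (-1) ^ r * ((N.choose a : ℤ) * B ((r : ℤ) - 1 - x) (r - a)) := by
    intro a ha
    rw [Finset.mem_range] at ha
    rw [B_neg (x - a) (r - a)]
    have h2 : ((r - a : ℕ) : ℤ) - 1 - (x - a) = (r : ℤ) - 1 - x := by omega
    rw [h2]
    have h4 : (-1 : ℤ) ^ a * (-1 : ℤ) ^ (r - a) = (-1) ^ r := by
      rw [← pow_add]; congr 1; omega
    linear_combination ((N.choose a : ℤ) * B ((r : ℤ) - 1 - x) (r - a)) * h4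
  rw [Finset.sum_congr rfl step, ← Finset.mul_sum, B_vandermonde N r ((r : ℤ) - 1 - x)]
  rw [B_neg (x - N) r]
  have : (r : ℤ) - 1 - (x - N) = (r : ℤ) - 1 - x + N := by ring
  rw [this]

/-- sign of an integer exponent -/
def eps (z : ℤ) : ℤ := (-1) ^ z.natAbs

lemma eps_eq (z : ℤ) : eps z = if Even z then 1 else -1 := by
  unfold eps; split <;> rename_i h
  · exact Even.neg_one_pow (Int.natAbs_even.mpr h)
  · exact Odd.neg_one_pow (Int.natAbs_odd.mpr (Int.not_even_iff_odd.mp h))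

lemma eps_add (x y : ℤ) : eps (x + y) = eps x * eps y := by
  simp only [eps_eq, Int.even_add]
  by_cases hx : Even x <;> by_cases hy : Even y <;> simp [hx, hy]

lemma eps_natCast (a : ℕ) : eps (a : ℤ) = (-1) ^ a := by
  simp [eps]

lemma eps_neg (x : ℤ) : eps (-x) = eps x := by
  unfold eps; rw [Int.natAbs_neg]

lemma q_eps (z : ℤ) : (-1 : ℚ) ^ z = ((eps z : ℤ) : ℚ) := by
  unfold eps
  rcases Int.natAbs_eq z with h | h
  · conv_lhs => rw [h]
    rw [zpow_natCast]; push_cast; ring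
  · conv_lhs => rw [h]
    rw [zpow_neg, zpow_natCast, ← inv_pow, show (-1 : ℚ)⁻¹ = -1 by norm_num]
    push_cast; ring

lemma choose_cube (μ j : ℕ) :
    ((μ + 3).choose (j + 3) : ℤ) * ((j + 3) * (j + 2) * (j + 1))
      = ((μ + 3) * (μ + 2) * (μ + 1)) * (μ.choose j : ℤ) := by
  have h1 := Nat.add_one_mul_choose_eq (μ + 2) (j + 2)
  have h2 := Nat.add_one_mul_choose_eq (μ + 1) (j + 1)
  have h3 := Nat.add_one_mul_choose_eq μ j
  simp only [Nat.succ_eq_add_one, show μ + 2 + 1 = μ + 3 from by omega,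
    show j + 2 + 1 = j + 3 from by omega, show μ + 1 + 1 = μ + 2 from by omega,
    show j + 1 + 1 = j + 2 from by omega] at h1 h2 h3
  zify at h1 h2 h3
  linear_combination (-((j : ℤ) + 2) * ((j : ℤ) + 1)) * h1 - ((μ : ℤ) + 3) * ((j : ℤ) + 1) * h2
    - ((μ : ℤ) + 3) * ((μ : ℤ) + 2) * h3

lemma C_eq_B (n kk : ℤ) (h : 0 ≤ kk) : C n kk = B n kk.toNat := by
  unfold C B
  rcases le_or_gt 0 n with hn | hn
  · rw [if_pos hn, if_pos h, if_pos hn]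
  · rw [if_neg (by omega), if_pos h, if_neg (by omega)]
    rw [Int.toNat_of_nonneg h]

lemma C_nat (n kk : ℕ) : C (n : ℤ) kk = (n.choose kk : ℤ) := by
  rw [C_eq_B _ _ (by positivity), Int.toNat_natCast, B_nat]

lemma endgame (d : ℕ) :
    B (2 - (d : ℤ)) d = (-1 : ℤ) ^ d * C (2 * (d : ℤ) - 3) ((d : ℤ) - 3) := by
  match d with
  | 0 => norm_num [B, C]
  | 1 => norm_num [B, C]
  | 2 => norm_num [B, C]
  | (e + 3) =>
    have h1 : ¬ (0 ≤ (2 : ℤ) - ((e + 3 : ℕ) : ℤ)) := by push_cast; omega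
    have h2 : (0 : ℤ) ≤ 2 * ((e + 3 : ℕ) : ℤ) - 3 := by push_cast; omega
    have h3 : (0 : ℤ) ≤ ((e + 3 : ℕ) : ℤ) - 3 := by push_cast; omega
    unfold B C
    rw [if_neg h1, if_pos h2, if_pos h3]
    have t1 : (((e + 3 : ℕ) : ℤ) - (2 - ((e + 3 : ℕ) : ℤ)) - 1).toNat = 2 * e + 3 := by
      push_cast; omega
    have t2 : (2 * ((e + 3 : ℕ) : ℤ) - 3).toNat = 2 * e + 3 := by push_cast; omega
    have t3 : (((e + 3 : ℕ) : ℤ) - 3).toNat = e := by push_cast; omega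
    rw [t1, t2, t3]
    have sym : (2 * e + 3).choose (e + 3) = (2 * e + 3).choose e := by
      rw [← Nat.choose_symm (by omega : e + 3 ≤ 2 * e + 3)]
      congr 1
      omega
    rw [sym]

lemma final_step (r μ : ℕ) :
    (if μ ≤ r then B ((μ : ℤ) + 4 - ((r : ℤ) + 2)) (r - μ) else 0)
      = eps (((r : ℤ) + 2) - ((μ : ℤ) + 2)) *
        C (2 * ((r : ℤ) + 2) - 2 * ((μ : ℤ) + 2) - 3) (((r : ℤ) + 2) - ((μ : ℤ) + 2) - 3) := by
  by_cases h : μ ≤ r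
  · rw [if_pos h]
    have h1 : (μ : ℤ) + 4 - ((r : ℤ) + 2) = 2 - ((r - μ : ℕ) : ℤ) := by omega
    have h2 : ((r : ℤ) + 2) - ((μ : ℤ) + 2) = ((r - μ : ℕ) : ℤ) := by omega
    have h3 : 2 * ((r : ℤ) + 2) - 2 * ((μ : ℤ) + 2) - 3 = 2 * ((r - μ : ℕ) : ℤ) - 3 := by omega
    rw [h1, h2, h3, endgame (r - μ), eps_natCast]
  · rw [if_neg h]
    have hC : C (2 * ((r : ℤ) + 2) - 2 * ((μ : ℤ) + 2) - 3) (((r : ℤ) + 2) - ((μ : ℤ) + 2) - 3)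
        = 0 := by
      unfold C
      rw [if_neg (by omega), if_neg (by omega), if_neg (by omega)]
    rw [hC, mul_zero]

lemma shift3 (g : ℕ → ℤ) (n : ℕ) (h0 : g 0 = 0) (h1 : g 1 = 0) (h2 : g 2 = 0) :
    ∑ b ∈ Finset.range (n + 3), g b = ∑ j ∈ Finset.range n, g (j + 3) := by
  rw [Finset.sum_range_succ' _ (n + 2), Finset.sum_range_succ' _ (n + 1),
    Finset.sum_range_succ' _ n]
  norm_num [h0, h1, h2]

lemma final_step' (r μ : ℕ) :
    (if μ ≤ r then B (((μ + 2 : ℕ) : ℤ) + 2 - ((r + 2 : ℕ) : ℤ)) (r - μ) else 0)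
      = eps (((r + 2 : ℕ) : ℤ) + -((μ + 2 : ℕ) : ℤ)) *
        C (2 * ((r + 2 : ℕ) : ℤ) + 2 * -((μ + 2 : ℕ) : ℤ) - 3)
          (((r + 2 : ℕ) : ℤ) + -((μ + 2 : ℕ) : ℤ) - 3) := by
  have h1 : ((μ + 2 : ℕ) : ℤ) + 2 - ((r + 2 : ℕ) : ℤ) = (μ : ℤ) + 4 - ((r : ℤ) + 2) := by
    push_cast; ring
  have h2 : ((r + 2 : ℕ) : ℤ) + -((μ + 2 : ℕ) : ℤ) = ((r : ℤ) + 2) - ((μ : ℤ) + 2) := by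
    push_cast; ring
  have h3 : 2 * ((r + 2 : ℕ) : ℤ) + 2 * -((μ + 2 : ℕ) : ℤ) - 3
      = 2 * ((r : ℤ) + 2) - 2 * ((μ : ℤ) + 2) - 3 := by push_cast; ring
  have h4 : ((r + 2 : ℕ) : ℤ) + -((μ + 2 : ℕ) : ℤ) - 3
      = ((r : ℤ) + 2) - ((μ : ℤ) + 2) - 3 := by push_cast; ring
  rw [h1, h2, h3, final_step r μ]

/-- For `k ≥ 0`, `l ≤ −2`:
`∑_{a=0}^{k−2} ∑_{b=0}^{−l+1} (−1)^{a+l−b} C(2k,a) C(−l+1,b) C(k−a−l+b−1, k−2−a) b(b−1)(b−2)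
  = (l^3−l)(−1)^{k+l} C(2k+2l−3, k+l−3)`. -/
theorem stmt6 (k : ℕ) (l : ℤ) (hl : l ≤ -2) :
    ∑ a ∈ Finset.range (k - 1), ∑ b ∈ Finset.range (-l + 2).toNat,
        (-1 : ℚ) ^ ((a : ℤ) + l - b) *
          (C (2 * k) a * C (-l + 1) b * C ((k : ℤ) - a - l + b - 1) ((k : ℤ) - 2 - a) : ℤ) *
          ((b : ℚ) * ((b : ℚ) - 1) * ((b : ℚ) - 2)) =
      ((l : ℚ) ^ 3 - l) * (-1 : ℚ) ^ ((k : ℤ) + l) *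
        (C (2 * k + 2 * l - 3) ((k : ℤ) + l - 3) : ℤ) := by
  obtain ⟨μ, hμ, rfl⟩ : ∃ μ : ℕ, 2 ≤ μ + 2 ∧ l = -((μ + 2 : ℕ) : ℤ) :=
    ⟨(-l).toNat - 2, by omega, by omega⟩
  rcases Nat.lt_or_ge k 2 with hk | hk
  · rw [show k - 1 = 0 from by omega, Finset.range_zero, Finset.sum_empty]
    have hC : C (2 * (k : ℤ) + 2 * -((μ + 2 : ℕ) : ℤ) - 3) ((k : ℤ) + -((μ + 2 : ℕ) : ℤ) - 3)
        = 0 := by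
      unfold C
      rw [if_neg (by push_cast; omega), if_neg (by push_cast; omega), if_neg (by push_cast; omega)]
    rw [hC]
    push_cast
    ring
  obtain ⟨r, rfl⟩ : ∃ r : ℕ, k = r + 2 := ⟨k - 2, by omega⟩
  rw [show r + 2 - 1 = r + 1 from by omega,
    show (-(-((μ + 2 : ℕ) : ℤ)) + 2).toNat = μ + 4 from by omega]
  -- convert LHS to a cast of an integer double sum
  have hL : ∑ a ∈ Finset.range (r + 1), ∑ b ∈ Finset.range (μ + 4),
        (-1 : ℚ) ^ ((a : ℤ) + -((μ + 2 : ℕ) : ℤ) - b) *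
          (C (2 * ((r + 2 : ℕ) : ℤ)) a * C (-(-((μ + 2 : ℕ) : ℤ)) + 1) b *
            C (((r + 2 : ℕ) : ℤ) - a - -((μ + 2 : ℕ) : ℤ) + b - 1) (((r + 2 : ℕ) : ℤ) - 2 - a) : ℤ) *
          ((b : ℚ) * ((b : ℚ) - 1) * ((b : ℚ) - 2))
      = (((∑ a ∈ Finset.range (r + 1), ∑ b ∈ Finset.range (μ + 4),
          eps ((a : ℤ) + -((μ + 2 : ℕ) : ℤ) - b) *
            (C (2 * ((r + 2 : ℕ) : ℤ)) a * C (-(-((μ + 2 : ℕ) : ℤ)) + 1) b *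
              C (((r + 2 : ℕ) : ℤ) - a - -((μ + 2 : ℕ) : ℤ) + b - 1) (((r + 2 : ℕ) : ℤ) - 2 - a)) *
            ((b : ℤ) * ((b : ℤ) - 1) * ((b : ℤ) - 2)) : ℤ)) : ℚ) := by
    push_cast
    refine Finset.sum_congr rfl fun a _ => Finset.sum_congr rfl fun b _ => ?_
    rw [q_eps]
  rw [hL, q_eps]
  have hR : ((((-((μ + 2 : ℕ) : ℤ)) : ℤ) : ℚ) ^ 3 - (((-((μ + 2 : ℕ) : ℤ)) : ℤ) : ℚ)) *
        ((eps (((r + 2 : ℕ) : ℤ) + -((μ + 2 : ℕ) : ℤ)) : ℤ) : ℚ) *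
        ((C (2 * ((r + 2 : ℕ) : ℤ) + 2 * -((μ + 2 : ℕ) : ℤ) - 3)
          (((r + 2 : ℕ) : ℤ) + -((μ + 2 : ℕ) : ℤ) - 3) : ℤ) : ℚ)
      = ((((-((μ + 2 : ℕ) : ℤ)) ^ 3 - (-((μ + 2 : ℕ) : ℤ))) *
          eps (((r + 2 : ℕ) : ℤ) + -((μ + 2 : ℕ) : ℤ)) *
          C (2 * ((r + 2 : ℕ) : ℤ) + 2 * -((μ + 2 : ℕ) : ℤ) - 3)
            (((r + 2 : ℕ) : ℤ) + -((μ + 2 : ℕ) : ℤ) - 3) : ℤ) : ℚ) := by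
    push_cast
    ring
  rw [hR]
  congr 1
  -- now a pure ℤ identity
  rw [Finset.sum_comm]
  have inner : ∀ b ∈ Finset.range (μ + 4),
      (∑ a ∈ Finset.range (r + 1), eps ((a : ℤ) + -((μ + 2 : ℕ) : ℤ) - b) *
        (C (2 * ((r + 2 : ℕ) : ℤ)) a * C (-(-((μ + 2 : ℕ) : ℤ)) + 1) b *
          C (((r + 2 : ℕ) : ℤ) - a - -((μ + 2 : ℕ) : ℤ) + b - 1) (((r + 2 : ℕ) : ℤ) - 2 - a)) *
        ((b : ℤ) * ((b : ℤ) - 1) * ((b : ℤ) - 2)))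
      = eps (-((μ + 2 : ℕ) : ℤ) - b) * ((μ + 3).choose b : ℤ) *
          ((b : ℤ) * ((b : ℤ) - 1) * ((b : ℤ) - 2)) *
          B (((μ + 2 : ℕ) : ℤ) + b - 1 - ((r + 2 : ℕ) : ℤ)) r := by
    intro b hb
    have e1 : ∀ a ∈ Finset.range (r + 1),
        eps ((a : ℤ) + -((μ + 2 : ℕ) : ℤ) - b) *
          (C (2 * ((r + 2 : ℕ) : ℤ)) a * C (-(-((μ + 2 : ℕ) : ℤ)) + 1) b *
            C (((r + 2 : ℕ) : ℤ) - a - -((μ + 2 : ℕ) : ℤ) + b - 1) (((r + 2 : ℕ) : ℤ) - 2 - a)) *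
          ((b : ℤ) * ((b : ℤ) - 1) * ((b : ℤ) - 2))
        = (eps (-((μ + 2 : ℕ) : ℤ) - b) * ((μ + 3).choose b : ℤ) *
            ((b : ℤ) * ((b : ℤ) - 1) * ((b : ℤ) - 2))) *
          ((-1 : ℤ) ^ a * ((2 * (r + 2)).choose a : ℤ) *
            B ((((r + 2 : ℕ) : ℤ) + ((μ + 2 : ℕ) : ℤ) + b - 1) - a) (r - a)) := by
      intro a ha
      rw [Finset.mem_range] at ha
      have c1 : C (2 * ((r + 2 : ℕ) : ℤ)) (a : ℤ) = ((2 * (r + 2)).choose a : ℤ) := by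
        rw [show 2 * ((r + 2 : ℕ) : ℤ) = ((2 * (r + 2) : ℕ) : ℤ) by push_cast; ring, C_nat]
      have c2 : C (-(-((μ + 2 : ℕ) : ℤ)) + 1) (b : ℤ) = ((μ + 3).choose b : ℤ) := by
        rw [show -(-((μ + 2 : ℕ) : ℤ)) + 1 = ((μ + 3 : ℕ) : ℤ) by push_cast; ring, C_nat]
      have c3 : C (((r + 2 : ℕ) : ℤ) - a - -((μ + 2 : ℕ) : ℤ) + b - 1) (((r + 2 : ℕ) : ℤ) - 2 - a)
          = B ((((r + 2 : ℕ) : ℤ) + ((μ + 2 : ℕ) : ℤ) + b - 1) - a) (r - a) := by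
        rw [C_eq_B _ _ (by push_cast; omega)]
        congr 1
        · push_cast; ring
        · push_cast; omega
      rw [c1, c2, c3]
      have e : eps ((a : ℤ) + -((μ + 2 : ℕ) : ℤ) - b)
          = (-1 : ℤ) ^ a * eps (-((μ + 2 : ℕ) : ℤ) - b) := by
        rw [show (a : ℤ) + -((μ + 2 : ℕ) : ℤ) - b = (a : ℤ) + (-((μ + 2 : ℕ) : ℤ) - b) by ring,
          eps_add, eps_natCast]
      rw [e]
      ring
    rw [Finset.sum_congr rfl e1, ← Finset.mul_sum,
      lem6 (2 * (r + 2)) r (((r + 2 : ℕ) : ℤ) + ((μ + 2 : ℕ) : ℤ) + b - 1)]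
    have harg : ((r + 2 : ℕ) : ℤ) + ((μ + 2 : ℕ) : ℤ) + b - 1 - ((2 * (r + 2) : ℕ) : ℤ)
        = ((μ + 2 : ℕ) : ℤ) + b - 1 - ((r + 2 : ℕ) : ℤ) := by push_cast; ring
    rw [harg]
  rw [Finset.sum_congr rfl inner]
  rw [show μ + 4 = (μ + 1) + 3 from by omega]
  rw [shift3 (fun b => eps (-((μ + 2 : ℕ) : ℤ) - b) * ((μ + 3).choose b : ℤ) *
      ((b : ℤ) * ((b : ℤ) - 1) * ((b : ℤ) - 2)) *
      B (((μ + 2 : ℕ) : ℤ) + b - 1 - ((r + 2 : ℕ) : ℤ)) r) (μ + 1)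
    (by norm_num) (by norm_num) (by norm_num)]
  have e2 : ∀ j ∈ Finset.range (μ + 1),
      eps (-((μ + 2 : ℕ) : ℤ) - ((j + 3 : ℕ) : ℤ)) * ((μ + 3).choose (j + 3) : ℤ) *
        (((j + 3 : ℕ) : ℤ) * (((j + 3 : ℕ) : ℤ) - 1) * (((j + 3 : ℕ) : ℤ) - 2)) *
        B (((μ + 2 : ℕ) : ℤ) + ((j + 3 : ℕ) : ℤ) - 1 - ((r + 2 : ℕ) : ℤ)) r
      = (eps (1 - ((μ + 2 : ℕ) : ℤ)) * (((μ + 3) * (μ + 2) * (μ + 1) : ℕ) : ℤ)) *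
        ((-1 : ℤ) ^ j * (μ.choose j : ℤ) *
          B ((((μ + 2 : ℕ) : ℤ) + 2 - ((r + 2 : ℕ) : ℤ)) + j) r) := by
    intro j _
    have heps : eps (-((μ + 2 : ℕ) : ℤ) - ((j + 3 : ℕ) : ℤ))
        = eps (1 - ((μ + 2 : ℕ) : ℤ)) * (-1 : ℤ) ^ j := by
      rw [show -((μ + 2 : ℕ) : ℤ) - ((j + 3 : ℕ) : ℤ)
          = (1 - ((μ + 2 : ℕ) : ℤ)) + (-(((j + 4 : ℕ)) : ℤ)) by push_cast; ring,
        eps_add, eps_neg, eps_natCast, show (-1 : ℤ) ^ (j + 4) = (-1) ^ j from by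
          rw [pow_add]; norm_num]
    have hB : ((μ + 2 : ℕ) : ℤ) + ((j + 3 : ℕ) : ℤ) - 1 - ((r + 2 : ℕ) : ℤ)
        = (((μ + 2 : ℕ) : ℤ) + 2 - ((r + 2 : ℕ) : ℤ)) + j := by push_cast; ring
    rw [heps, hB]
    have hcc := choose_cube μ j
    push_cast
    push_cast at hcc
    linear_combination (eps (1 - ((μ : ℤ) + 2)) * (-1 : ℤ) ^ j *
      B ((((μ : ℤ) + 2) + 2 - (((r : ℤ) + 2))) + j) r) * hcc
  rw [Finset.sum_congr rfl e2, ← Finset.mul_sum,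
    B_diff r μ (((μ + 2 : ℕ) : ℤ) + 2 - ((r + 2 : ℕ) : ℤ)), final_step' r μ]
  have hsign : eps (1 - ((μ + 2 : ℕ) : ℤ)) * (-1 : ℤ) ^ μ = -1 := by
    rw [show (1 : ℤ) - ((μ + 2 : ℕ) : ℤ) = -(((μ + 1 : ℕ)) : ℤ) by push_cast; ring,
      eps_neg, eps_natCast, ← pow_add]
    exact Odd.neg_one_pow ⟨μ, by omega⟩
  push_cast at hsign ⊢
  linear_combination (((μ : ℤ) + 3) * ((μ : ℤ) + 2) * ((μ : ℤ) + 1) *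
    eps (((r : ℤ) + 2) + -((μ : ℤ) + 2)) *
    C (2 * ((r : ℤ) + 2) + 2 * -((μ : ℤ) + 2) - 3) (((r : ℤ) + 2) + -((μ : ℤ) + 2) - 3)) * hsign
end

section
/- For integers k ≥ 0 and l ≤ −2 the double sum ∑_{a=0}^{k−2} ∑_{b=0}^{−l+1} (−1)^{a+b} C(2k,a)·C(−l+1,b)·C(k−a−2l−b−1, −b−2l+1) equals −(−1)^{l+k}·C(2k+2l−2, k+l+1) − δ_{k+l,−1} − 2·δ_{k+l,0}. -/
/-! Write `m = -l`; then every binomial on the left has nonnegative arguments. For fixed `a`, the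
inner sum is the coefficient of `X^(2m+1)` in
`∑_b (-1)^b C(m+1,b) X^b (1+X)^(N-b) = (1+X)^(N-m-1)` with `N = k+2m-1-a`, so the double sum
collapses to `∑_a (-1)^a C(2k,a) C(k+m-2-a, 2m+1)`. This vanishes unless `k ≥ m+3`; then, since
`C(-(2m+2), j) = (-1)^j C(2m+1+j, j)`, it is `(-1)^(k-m-3)` times the Chu–Vandermonde convolution
of `C(2k,·)` with `C(-(2m+2),·)` at `k-m-3`, that is `(-1)^(k-m-3) C(2k-2m-2, k-m-3)`.
On the right, the deltas cancel the generalized binomials `C(-2,1) = -2` and `C(-4,0) = 1` at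
`k + l = 0, -1`; for every other `k + l ≤ 2` the right side is `0`. -/

open Finset
open scoped Polynomial

theorem sum_range_neg_one_pow_mul_choose_mul_choose_sub {p N r : ℕ} (hpN : p ≤ N)
    (hpr : p ≤ r) :
    ∑ b ∈ range (p + 1), (-1 : ℤ) ^ b * p.choose b * (N - b).choose (r - b) =
      (N - p).choose r := by
  open Polynomial in
  have expand : (1 + X : ℤ[X]) ^ (N - p) = ∑ b ∈ range (p + 1),
      Polynomial.C ((-1) ^ b * p.choose b : ℤ) * (X ^ b * (1 + X) ^ (N - b)) :=
    calc (1 + X : ℤ[X]) ^ (N - p) = (-X + (1 + X)) ^ p * (1 + X) ^ (N - p) := by simp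
      _ = _ := by
        rw [add_pow, sum_mul]
        refine sum_congr rfl fun b hb => ?_
        have hb : b ≤ p := Nat.lt_succ_iff.mp (mem_range.mp hb)
        rw [show N - b = (p - b) + (N - p) by omega, pow_add]
        simp only [map_mul, map_pow, map_neg, map_one, map_natCast]
        ring
  have := congrArg (Polynomial.coeff · r) expand
  simp only [Polynomial.coeff_one_add_X_pow, Polynomial.finsetSum_coeff,
    Polynomial.coeff_C_mul, Polynomial.coeff_X_pow_mul'] at this
  rw [this]
  refine sum_congr rfl fun b hb => ?_
  rw [if_pos (by have := mem_range.mp hb; omega)]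

theorem sum_range_neg_one_pow_mul_choose_mul_choose_add_sub (n r A : ℕ) :
    ∑ i ∈ range (A + 1), (-1 : ℤ) ^ i * n.choose i * (r + A - i).choose r =
      (-1) ^ A * Ring.choose ((n : ℤ) - (r + 1)) A := by
  rw [sub_eq_add_neg, Ring.add_choose_eq A (Commute.all _ _),
    Nat.sum_antidiagonal_eq_sum_range_succ (fun i j => Ring.choose (n : ℤ) i * Ring.choose _ j),
    mul_sum]
  refine sum_congr rfl fun i hi => ?_
  have hi : i ≤ A := Nat.lt_succ_iff.mp (mem_range.mp hi)
  have hcast : (r : ℤ) + 1 + (A - i : ℕ) - 1 = (r + (A - i) : ℕ) := by push_cast; ring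
  rw [Ring.choose_neg, Ring.choose_natCast, Units.smul_def, Int.coe_negOnePow_natCast, hcast,
    Ring.choose_natCast, ← Nat.choose_symm_add, smul_eq_mul,
    show r + (A - i) = r + A - i by omega]
  have hsign : (-1 : ℤ) ^ A * (-1) ^ (A - i) = (-1) ^ i := by
    rw [← pow_add, show A + (A - i) = i + 2 * (A - i) by omega, pow_add, pow_mul]
    simp
  rw [← hsign]
  ring

theorem C_natCast (n k : ℕ) : C n k = n.choose k := by
  simp [C]

theorem C_eq_zero_of_lt {n k : ℤ} (h : n < k) (hnk : 0 ≤ n ∨ k < 0) : C n k = 0 := by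
  unfold C
  split_ifs <;> first | omega | simp [Nat.choose_eq_zero_of_lt, *]

theorem neg_neg_one_zpow_mul_C_sub_deltas_eq_zero {k l : ℤ} (h : k + l ≤ 2) :
    -((-1 : ℚ) ^ (l + k)) * (C (2 * k + 2 * l - 2) (k + l + 1) : ℤ) -
      (if k + l = -1 then 1 else 0) - 2 * (if k + l = 0 then 1 else 0) = 0 := by
  rw [add_comm l, show 2 * k + 2 * l - 2 = 2 * (k + l) - 2 by ring]
  generalize k + l = d at h ⊢
  by_cases hd : d = -1 ∨ d = 0
  · rcases hd with rfl | rfl <;> norm_num [C]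
  · rw [C_eq_zero_of_lt (by omega) (by omega), if_neg (by omega), if_neg (by omega)]
    simp

theorem inner_sum_eq_choose_mul_choose (k a m : ℕ) {l : ℤ} (hlm : l = -m) (ha : a + 2 ≤ k) :
    ∑ b ∈ range (-l + 2).toNat, (-1 : ℚ) ^ (a + b) *
        (C (2 * k) a * C (-l + 1) b *
          C ((k : ℤ) - a - 2 * l - b - 1) (-(b : ℤ) - 2 * l + 1) : ℤ) =
      ((-1) ^ a * (2 * k).choose a * (k + m - 2 - a).choose (2 * m + 1) : ℤ) := by
  subst hlm
  have hN := sum_range_neg_one_pow_mul_choose_mul_choose_sub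
    (p := m + 1) (N := k + 2 * m - 1 - a) (r := 2 * m + 1) (by omega) (by omega)
  rw [show k + 2 * m - 1 - a - (m + 1) = k + m - 2 - a by omega] at hN
  rw [← hN, show (-(-(m : ℤ)) + 2).toNat = m + 1 + 1 by omega, mul_sum]
  push_cast
  refine sum_congr rfl fun b hb => ?_
  have hb : b ≤ m + 1 := Nat.lt_succ_iff.mp (mem_range.mp hb)
  rw [show 2 * (k : ℤ) = (2 * k : ℕ) by push_cast; ring,
    show -(-(m : ℤ)) + 1 = (m + 1 : ℕ) by simp,
    show (k : ℤ) - a - 2 * -(m : ℤ) - b - 1 = (k + 2 * m - 1 - a - b : ℕ) by omega,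
    show -(b : ℤ) - 2 * -(m : ℤ) + 1 = (2 * m + 1 - b : ℕ) by omega,
    C_natCast, C_natCast, C_natCast,
    Nat.sub_sub (k + 2 * m - 1) a b]
  push_cast
  ring

theorem outer_sum_eq_zero_of_le {k m : ℕ} (hk : k ≤ m + 2) :
    ∑ a ∈ range (k - 1),
      (-1 : ℤ) ^ a * (2 * k).choose a * (k + m - 2 - a).choose (2 * m + 1) = 0 :=
  sum_eq_zero fun a _ => by
    rw [Nat.choose_eq_zero_of_lt (n := k + m - 2 - a) (by omega), Nat.cast_zero, mul_zero]

theorem outer_sum_eq_neg_one_pow_mul_choose (m A : ℕ) :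
    ∑ a ∈ range (m + 3 + A - 1), (-1 : ℤ) ^ a * (2 * (m + 3 + A)).choose a *
        (m + 3 + A + m - 2 - a).choose (2 * m + 1) = (-1) ^ A * (2 * A + 4).choose A := by
  have htrunc : range (A + 1) ⊆ range (m + 3 + A - 1) := range_subset_range.mpr (by omega)
  rw [← sum_subset htrunc fun a _ ha => by
    rw [Nat.choose_eq_zero_of_lt (n := m + 3 + A + m - 2 - a) (by simp at ha; omega),
      Nat.cast_zero, mul_zero]]
  have := sum_range_neg_one_pow_mul_choose_mul_choose_add_sub (2 * (m + 3 + A)) (2 * m + 1) A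
  rw [show ((2 * (m + 3 + A) : ℕ) : ℤ) - ((2 * m + 1 : ℕ) + 1) = (2 * A + 4 : ℕ) by
      push_cast; ring,
    Ring.choose_natCast] at this
  rw [← this]
  refine sum_congr rfl fun a _ => ?_
  rw [show m + 3 + A + m - 2 - a = 2 * m + 1 + A - a by omega]

/-- For `k ≥ 0`, `l ≤ −2`:
`∑_{a=0}^{k−2} ∑_{b=0}^{−l+1} (−1)^{a+b} C(2k,a) C(−l+1,b) C(k−a−2l−b−1, −b−2l+1)
  = −(−1)^{l+k} C(2k+2l−2, k+l+1) − δ_{k+l,−1} − 2 δ_{k+l,0}`. -/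
theorem stmt9 (k : ℕ) (l : ℤ) (hl : l ≤ -2) :
    ∑ a ∈ Finset.range (k - 1), ∑ b ∈ Finset.range (-l + 2).toNat,
        (-1 : ℚ) ^ (a + b) *
          (C (2 * k) a * C (-l + 1) b *
            C ((k : ℤ) - a - 2 * l - b - 1) (-(b : ℤ) - 2 * l + 1) : ℤ) =
      -((-1 : ℚ) ^ (l + (k : ℤ))) * (C (2 * k + 2 * l - 2) ((k : ℤ) + l + 1) : ℤ) -
        (if (k : ℤ) + l = -1 then 1 else 0) - 2 * (if (k : ℤ) + l = 0 then 1 else 0) := by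
  obtain ⟨m, hlm⟩ : ∃ m : ℕ, l = -m := ⟨(-l).toNat, by omega⟩
  rw [sum_congr rfl fun a ha =>
    inner_sum_eq_choose_mul_choose k a m hlm (by have := mem_range.mp ha; omega), ← Int.cast_sum]
  rcases le_or_gt k (m + 2) with hk | hk
  · rw [outer_sum_eq_zero_of_le hk, Int.cast_zero,
      neg_neg_one_zpow_mul_C_sub_deltas_eq_zero (by omega)]
  · obtain ⟨A, rfl⟩ : ∃ A, k = m + 3 + A := ⟨k - m - 3, by omega⟩
    subst hlm
    rw [outer_sum_eq_neg_one_pow_mul_choose, if_neg (by omega), if_neg (by omega),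
      show 2 * ((m + 3 + A : ℕ) : ℤ) + 2 * -(m : ℤ) - 2 = (A + (A + 4) : ℕ) by
        push_cast; ring,
      show ((m + 3 + A : ℕ) : ℤ) + -(m : ℤ) + 1 = (A + 4 : ℕ) by push_cast; ring,
      show -(m : ℤ) + (m + 3 + A : ℕ) = (A + 3 : ℕ) by push_cast; ring,
      C_natCast, ← Nat.choose_symm_add, show A + (A + 4) = 2 * A + 4 by ring, zpow_natCast]
    push_cast
    ring
end

section
/- With R, D, d_n, e_n as above, in Der(R) one has [d_m, d_n] = (n−m)(d_{m+n+1} + 4 d_{m+n}). -/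
/-!
For any derivation `D` of a commutative ring, `[f D, g D] = (f D(g) - g D(f)) D`, so the
bracket `[dₘ, dₙ]` is `(tᵐu D(tⁿu) - tⁿu D(tᵐu)) D`. Since `D(tᵏ) = k tᵏ⁻¹ u` and `u² = t² + 4t`,
`D(tᵏu) = (k + 1) tᵏ⁺¹ + (4k + 2) tᵏ`, and the coefficient collapses to
`(n - m)(tᵐ⁺ⁿ⁺¹ + 4 tᵐ⁺ⁿ) u`.
-/

set_option synthInstance.maxHeartbeats 1000000
set_option maxHeartbeats 1000000

open MvPolynomial in
/-- `R = ℂ[t, t⁻¹, u] / (u² − t² − 4t)`, modelled as `ℂ[x₀,x₁,x₂]` modulo the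
ideal generated by `x₀x₁ − 1` (making `x₀ = t` invertible with inverse `x₁`)
and `x₂² − x₀² − 4x₀`. -/
noncomputable abbrev R3 : Type :=
  MvPolynomial (Fin 3) ℂ ⧸
    Ideal.span {(X 0 * X 1 - 1 : MvPolynomial (Fin 3) ℂ), X 2 ^ 2 - X 0 ^ 2 - 4 * X 0}

open MvPolynomial in
/-- the class of `t` in `R`. -/
noncomputable def tR : R3 := Ideal.Quotient.mk _ (X 0)

open MvPolynomial in
/-- the class of `t⁻¹` in `R`. -/
noncomputable def tinv : R3 := Ideal.Quotient.mk _ (X 1)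

open MvPolynomial in
/-- the class of `u` in `R`. -/
noncomputable def uR : R3 := Ideal.Quotient.mk _ (X 2)

/-- integer powers `tⁿ` of the invertible element `t` of `R`. -/
noncomputable def tpow (n : ℤ) : R3 := if 0 ≤ n then tR ^ n.toNat else tinv ^ (-n).toNat

/-- `eR n = tⁿ D ∈ Der(R)` for a derivation `D`. -/
noncomputable def eR (D : Derivation ℂ R3 R3) (n : ℤ) : Derivation ℂ R3 R3 :=
  tpow n • D

/-- `dR n = tⁿ u D ∈ Der(R)` for a derivation `D`. -/
noncomputable def dR (D : Derivation ℂ R3 R3) (n : ℤ) : Derivation ℂ R3 R3 :=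
  (tpow n * uR) • D

namespace Derivation

section

variable {R A : Type*} [CommRing R] [CommRing A] [Algebra R A] (D : Derivation R A A)

theorem commutator_smul_smul (f g : A) : ⁅f • D, g • D⁆ = (f * D g - g * D f) • D := by
  ext a
  simp only [commutator_apply, smul_apply, smul_eq_mul, leibniz, sub_smul, sub_apply]
  ring

end

section

variable {R A : Type*} [CommSemiring R] [CommRing A] [Algebra R A] (D : Derivation R A A)

theorem leibniz_units_zpow (v : Aˣ) (n : ℤ) :
    D ↑(v ^ n) = (n : A) * ↑(v ^ (n - 1)) * D v := by
  have step (k : ℤ) : D ↑(v ^ (k + 1)) = ↑(v ^ k) * D v + ↑v * D ↑(v ^ k) := by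
    rw [zpow_add_one, Units.val_mul, leibniz, smul_eq_mul, smul_eq_mul, mul_comm]
  have shift (k : ℤ) : (↑v : A) * ↑(v ^ (k - 1)) = ↑(v ^ k) := by
    rw [← Units.val_mul, ← zpow_one_add, add_sub_cancel]
  induction n using Int.induction_on with
  | zero => simp
  | succ k ih =>
    rw [step, ih, add_sub_cancel_right]
    push_cast
    linear_combination (k : A) * D v * shift k
  | pred k ih =>
    have h := step (-k - 1)
    rw [sub_add_cancel, ih] at h
    have hinv : (↑v⁻¹ : A) * ↑v = 1 := by simp
    have shift' : (↑v⁻¹ : A) * ↑(v ^ (-k - 1 : ℤ)) = ↑(v ^ (-k - 1 - 1 : ℤ)) := by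
      rw [← Units.val_mul, ← zpow_neg_one, ← zpow_add, neg_add_eq_sub]
    push_cast at h ⊢
    linear_combination -(↑v⁻¹ : A) * h - D ↑(v ^ (-k - 1 : ℤ)) * hinv
      + (-(k : A) - 1) * D v * shift'

end

end Derivation

open MvPolynomial in
theorem tR_mul_tinv : tR * tinv = 1 := by
  rw [tR, tinv, ← map_mul, ← map_one (Ideal.Quotient.mk _)]
  exact Ideal.Quotient.eq.mpr (Ideal.subset_span (Set.mem_insert _ _))

open MvPolynomial in
theorem uR_sq : uR ^ 2 = tR ^ 2 + 4 * tR := by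
  rw [uR, tR, ← map_pow, ← map_pow, ← map_ofNat (Ideal.Quotient.mk _) 4, ← map_mul, ← map_add]
  refine Ideal.Quotient.eq.mpr (Ideal.subset_span ?_)
  rw [← sub_sub]
  exact Set.mem_insert_of_mem _ rfl

noncomputable def tUnit : R3ˣ := ⟨tR, tinv, tR_mul_tinv, mul_comm tinv tR ▸ tR_mul_tinv⟩

theorem val_tUnit : (tUnit : R3) = tR := rfl

theorem val_inv_tUnit : ((tUnit⁻¹ : R3ˣ) : R3) = tinv := rfl

theorem tpow_eq_val_zpow (n : ℤ) : tpow n = ↑(tUnit ^ n) := by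
  unfold tpow
  split_ifs with h
  · lift n to ℕ using h
    rw [zpow_natCast, Units.val_pow_eq_pow_val, Int.toNat_natCast, val_tUnit]
  · obtain ⟨k, rfl⟩ : ∃ k : ℕ, n = -k := ⟨(-n).toNat, by omega⟩
    rw [zpow_neg, zpow_natCast, ← inv_pow, Units.val_pow_eq_pow_val, neg_neg, Int.toNat_natCast,
      val_inv_tUnit]

theorem tpow_add (a b : ℤ) : tpow (a + b) = tpow a * tpow b := by
  simp only [tpow_eq_val_zpow, zpow_add, Units.val_mul]

theorem tpow_one : tpow 1 = tR := by simp [tpow]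

section

variable (D : Derivation ℂ R3 R3) (hDt : D tR = uR)
include hDt

theorem derivation_tpow (n : ℤ) : D (tpow n) = n * tpow (n - 1) * uR := by
  rw [tpow_eq_val_zpow, tpow_eq_val_zpow, D.leibniz_units_zpow, val_tUnit, hDt]

theorem derivation_tpow_mul_uR (hDu : D uR = tR + 2) (k : ℤ) :
    D (tpow k * uR) = ((k + 1) * tR + (4 * k + 2)) * tpow k := by
  have hk : tpow k = tpow (k - 1) * tR := by rw [← tpow_one, ← tpow_add, sub_add_cancel]
  rw [D.leibniz, derivation_tpow D hDt, hDu, smul_eq_mul, smul_eq_mul, hk]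
  linear_combination (k : R3) * tpow (k - 1) * uR_sq

end

/-- For any derivation `D` of `R` with `D t = u` and `D u = t + 2` (i.e. the
derivation `(t+2)∂ᵤ + u∂ₜ`), one has `[dₘ, dₙ] = (n − m)(d_{m+n+1} + 4 d_{m+n})`
in `Der(R)`. -/
theorem stmt15 (D : Derivation ℂ R3 R3) (hDt : D tR = uR) (hDu : D uR = tR + 2)
    (m n : ℤ) :
    ⁅dR D m, dR D n⁆ = (n - m) • (dR D (m + n + 1) + 4 • dR D (m + n)) := by
  have hcoeff : tpow m * uR * D (tpow n * uR) - tpow n * uR * D (tpow m * uR)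
      = ((n - m : ℤ) : R3) * (tpow (m + n + 1) * uR + 4 * (tpow (m + n) * uR)) := by
    rw [derivation_tpow_mul_uR D hDt hDu, derivation_tpow_mul_uR D hDt hDu]
    simp only [tpow_add, tpow_one]
    push_cast
    ring
  rw [dR, dR, Derivation.commutator_smul_smul, hcoeff, dR, dR]
  module
end
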